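/- Let J : W → W be ℝ-linear with J∘J = −id_W and ⟨Jx, Jy⟩ = ⟨x, y⟩ for all x, y ∈ W. Then there exists a subspace C⁺ ⊆ W with J(C⁺) = C⁺ such that the canonical pairing is positive definite on C⁺ and negative definite on the orthogonal complement C⁻ = (C⁺)^⊥ (which is also J-invariant), W = C⁺ ⊕ C⁻, and the restrictions of the projection π_V : W → V to C⁺ and to C⁻ are both isomorphisms onto V. -/

import Mathlib

/-!
Choose an inner product for which `J` is orthogonal and let `A` be the operator representing the
pairing, `⟪A x, y⟫ = ⟨x, y⟩`. Then `A` is self-adjoint, invertible and commutes with `J`, so its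
positive and negative spectral subspaces are `J`-invariant, complementary and orthogonal for the
pairing, which is positive resp. negative definite on them. Since `V*` is isotropic, `π_V` is
injective on both definite subspaces, and as their dimensions add up to `2 m`, both restrictions
are isomorphisms.
-/

open Module

/-- The canonical symmetric bilinear form on `W = V ⊕ V*`:
`⟨X+ξ, Y+η⟩ = (1/2)(ξ(Y) + η(X))`. -/
noncomputable def pairB (V : Type*) [AddCommGroup V] [Module ℝ V] :
    LinearMap.BilinForm ℝ (V × Module.Dual ℝ V) :=
  LinearMap.mk₂ ℝ (fun x y => (1/2) * (x.2 y.1 + y.2 x.1))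
    (fun x y z => by simp; ring)
    (fun c x y => by simp; ring)
    (fun x y z => by simp; ring)
    (fun c x y => by simp; ring)

open RealInnerProductSpace

noncomputable def spectralSubspace {E : Type*} [AddCommGroup E] [Module ℝ E] (A : E →ₗ[ℝ] E)
    (s : Set ℝ) : Submodule ℝ E :=
  ⨆ μ ∈ s, Module.End.eigenspace A μ

section Spectral

variable {E : Type*} [AddCommGroup E] [Module ℝ E] {A : E →ₗ[ℝ] E} {s : Set ℝ}

theorem eigenspace_le_spectralSubspace {μ : ℝ} (hμ : μ ∈ s) :
    Module.End.eigenspace A μ ≤ spectralSubspace A s :=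
  le_iSup₂ (f := fun μ (_ : μ ∈ s) => Module.End.eigenspace A μ) μ hμ

theorem map_spectralSubspace_le_of_commute {J : E →ₗ[ℝ] E} (hJA : Commute J A) :
    (spectralSubspace A s).map J ≤ spectralSubspace A s := by
  refine Submodule.map_le_iff_le_comap.mpr (iSup₂_le fun μ hμ x hx => ?_)
  refine eigenspace_le_spectralSubspace hμ (Module.End.mem_eigenspace_iff.mpr ?_)
  rw [← Module.End.mul_apply, ← hJA.eq, Module.End.mul_apply,
    Module.End.mem_eigenspace_iff.mp hx, map_smul]

end Spectral

namespace LinearMap.IsSymmetric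

variable {E : Type*} [NormedAddCommGroup E] [InnerProductSpace ℝ E] [FiniteDimensional ℝ E]
  {A : E →ₗ[ℝ] E} {s : Set ℝ} (hA : A.IsSymmetric)
include hA

theorem apply_eigenvectorBasis_eq_smul (i : Fin (finrank ℝ E)) :
    A (hA.eigenvectorBasis rfl i) = hA.eigenvalues rfl i • hA.eigenvectorBasis rfl i := by
  simp

theorem eigenvectorBasis_mem_spectralSubspace {i : Fin (finrank ℝ E)}
    (hi : hA.eigenvalues rfl i ∈ s) : hA.eigenvectorBasis rfl i ∈ spectralSubspace A s :=
  eigenspace_le_spectralSubspace hi (hA.hasEigenvector_eigenvectorBasis rfl i).1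

theorem inner_eigenvectorBasis_eq_zero_of_mem_eigenspace {μ : ℝ} {x : E}
    (hx : x ∈ Module.End.eigenspace A μ) {i : Fin (finrank ℝ E)} (hi : hA.eigenvalues rfl i ≠ μ) :
    ⟪hA.eigenvectorBasis rfl i, x⟫ = 0 := by
  have h : hA.eigenvalues rfl i * ⟪hA.eigenvectorBasis rfl i, x⟫
      = μ * ⟪hA.eigenvectorBasis rfl i, x⟫ := by
    rw [← real_inner_smul_left, ← hA.apply_eigenvectorBasis_eq_smul, hA,
      Module.End.mem_eigenspace_iff.mp hx, real_inner_smul_right]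
  exact (mul_eq_zero.mp (by linear_combination h)).resolve_left (sub_ne_zero.mpr hi)

theorem mem_spectralSubspace_iff {x : E} : x ∈ spectralSubspace A s ↔
    ∀ i, hA.eigenvalues rfl i ∉ s → ⟪hA.eigenvectorBasis rfl i, x⟫ = 0 := by
  set b := hA.eigenvectorBasis rfl
  constructor
  · intro hx i hi
    suffices spectralSubspace A s ≤ (ℝ ∙ b i)ᗮ from
      Submodule.mem_orthogonal_singleton_iff_inner_right.mp (this hx)
    refine iSup₂_le fun μ hμ y hy => Submodule.mem_orthogonal_singleton_iff_inner_right.mpr ?_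
    exact hA.inner_eigenvectorBasis_eq_zero_of_mem_eigenspace hy fun h => hi (h ▸ hμ)
  · intro h
    rw [← b.sum_repr' x]
    refine Submodule.sum_mem _ fun i _ => ?_
    by_cases hi : hA.eigenvalues rfl i ∈ s
    · exact Submodule.smul_mem _ _ (hA.eigenvectorBasis_mem_spectralSubspace hi)
    · rw [h i hi, zero_smul]
      exact Submodule.zero_mem _

theorem inner_apply_eq_sum (x y : E) :
    ⟪A x, y⟫ = ∑ i, hA.eigenvalues rfl i *
      (⟪hA.eigenvectorBasis rfl i, x⟫ * ⟪hA.eigenvectorBasis rfl i, y⟫) := by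
  rw [← (hA.eigenvectorBasis rfl).sum_inner_mul_inner (A x) y]
  refine Finset.sum_congr rfl fun i _ => ?_
  rw [hA x, hA.apply_eigenvectorBasis_eq_smul, real_inner_smul_right, real_inner_comm, mul_assoc]

theorem exists_inner_ne_zero_of_mem_spectralSubspace {x : E} (hx : x ∈ spectralSubspace A s)
    (hx0 : x ≠ 0) : ∃ i, hA.eigenvalues rfl i ∈ s ∧ ⟪hA.eigenvectorBasis rfl i, x⟫ ≠ 0 := by
  by_contra! h
  refine hx0 (InnerProductSpace.ext_inner_left_basis (hA.eigenvectorBasis rfl).toBasis fun i => ?_)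
  rw [OrthonormalBasis.coe_toBasis, inner_zero_right]
  by_cases hi : hA.eigenvalues rfl i ∈ s
  · exact h i hi
  · exact hA.mem_spectralSubspace_iff.mp hx i hi

theorem isCompl_spectralSubspace_compl :
    IsCompl (spectralSubspace A s) (spectralSubspace A sᶜ) := by
  constructor
  · refine Submodule.disjoint_def.mpr fun x hxs hxsc => by_contra fun hx0 => ?_
    obtain ⟨i, hi, hx⟩ := hA.exists_inner_ne_zero_of_mem_spectralSubspace hxs hx0
    exact hx (hA.mem_spectralSubspace_iff.mp hxsc i (Set.notMem_compl_iff.mpr hi))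
  · refine codisjoint_iff_le_sup.mpr fun x _ => ?_
    rw [← (hA.eigenvectorBasis rfl).sum_repr' x]
    refine Submodule.sum_mem _ fun i _ => Submodule.smul_mem _ _ ?_
    by_cases hi : hA.eigenvalues rfl i ∈ s
    · exact Submodule.mem_sup_left (hA.eigenvectorBasis_mem_spectralSubspace hi)
    · exact Submodule.mem_sup_right (hA.eigenvectorBasis_mem_spectralSubspace hi)

theorem inner_apply_self_pos_of_mem_spectralSubspace
    (hs : ∀ i, hA.eigenvalues rfl i ∈ s → 0 < hA.eigenvalues rfl i) {x : E}
    (hx : x ∈ spectralSubspace A s) (hx0 : x ≠ 0) : 0 < ⟪A x, x⟫ := by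
  obtain ⟨j, hjs, hj⟩ := hA.exists_inner_ne_zero_of_mem_spectralSubspace hx hx0
  rw [hA.inner_apply_eq_sum]
  refine Finset.sum_pos' (fun i _ => ?_) ⟨j, Finset.mem_univ j, ?_⟩
  · by_cases hi : hA.eigenvalues rfl i ∈ s
    · exact mul_nonneg (hs i hi).le (mul_self_nonneg _)
    · rw [hA.mem_spectralSubspace_iff.mp hx i hi, zero_mul, mul_zero]
  · exact mul_pos (hs j hjs) (mul_self_pos.mpr hj)

theorem inner_apply_self_neg_of_mem_spectralSubspace
    (hs : ∀ i, hA.eigenvalues rfl i ∈ s → hA.eigenvalues rfl i < 0) {x : E}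
    (hx : x ∈ spectralSubspace A s) (hx0 : x ≠ 0) : ⟪A x, x⟫ < 0 := by
  obtain ⟨j, hjs, hj⟩ := hA.exists_inner_ne_zero_of_mem_spectralSubspace hx hx0
  rw [hA.inner_apply_eq_sum]
  refine Finset.sum_neg' (fun i _ => ?_) ⟨j, Finset.mem_univ j, ?_⟩
  · by_cases hi : hA.eigenvalues rfl i ∈ s
    · exact mul_nonpos_of_nonpos_of_nonneg (hs i hi).le (mul_self_nonneg _)
    · rw [hA.mem_spectralSubspace_iff.mp hx i hi, zero_mul, mul_zero]
  · exact mul_neg_of_neg_of_pos (hs j hjs) (mul_self_pos.mpr hj)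

theorem mem_spectralSubspace_compl_iff
    (hs : ∀ i, hA.eigenvalues rfl i ∈ s → hA.eigenvalues rfl i ≠ 0) {y : E} :
    y ∈ spectralSubspace A sᶜ ↔ ∀ x ∈ spectralSubspace A s, ⟪A x, y⟫ = 0 := by
  rw [hA.mem_spectralSubspace_iff]
  simp only [Set.notMem_compl_iff]
  refine ⟨fun hy x hx => ?_, fun hy i hi => ?_⟩
  · rw [hA.inner_apply_eq_sum]
    refine Finset.sum_eq_zero fun i _ => ?_
    by_cases hi : hA.eigenvalues rfl i ∈ s
    · rw [hy i hi, mul_zero, mul_zero]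
    · rw [hA.mem_spectralSubspace_iff.mp hx i hi, zero_mul, mul_zero]
  · have := hy _ (hA.eigenvectorBasis_mem_spectralSubspace hi)
    rw [hA.apply_eigenvectorBasis_eq_smul, real_inner_smul_left] at this
    exact (mul_eq_zero.mp this).resolve_left (hs i hi)

end LinearMap.IsSymmetric

theorem Submodule.map_eq_self_of_map_le {R M : Type*} [Ring R] [AddCommGroup M] [Module R M]
    {J : M →ₗ[R] M} (hJ2 : J ∘ₗ J = -LinearMap.id) {p : Submodule R M} (h : p.map J ≤ p) :
    p.map J = p := by
  refine le_antisymm h fun x hx => ⟨-J x, neg_mem (h ⟨x, hx, rfl⟩), ?_⟩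
  rw [map_neg, ← LinearMap.comp_apply, hJ2]
  simp

namespace LinearMap.BilinForm

theorem exists_invariant_posDef_subspace_of_inner {E : Type*} [NormedAddCommGroup E]
    [InnerProductSpace ℝ E] [FiniteDimensional ℝ E] (B : LinearMap.BilinForm ℝ E) (hB : B.IsSymm)
    (hBnd : B.Nondegenerate) (J : E →ₗ[ℝ] E) (hJ2 : J ∘ₗ J = -LinearMap.id)
    (hJB : ∀ x y, B (J x) (J y) = B x y) (hJ : ∀ x y, ⟪J x, J y⟫ = ⟪x, y⟫) :
    ∃ Cp : Submodule ℝ E,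
      Cp.map J = Cp ∧
      (∀ x ∈ Cp, x ≠ 0 → 0 < B x x) ∧
      (∀ x ∈ B.orthogonal Cp, x ≠ 0 → B x x < 0) ∧
      (B.orthogonal Cp).map J = B.orthogonal Cp ∧
      IsCompl Cp (B.orthogonal Cp) := by
  have hJJ : ∀ x, J (J x) = -x := fun x => by simpa using LinearMap.congr_fun hJ2 x
  have hinner : (innerₗ E).Nondegenerate :=
    ⟨fun x hx => inner_self_eq_zero.mp (hx x), fun y hy => inner_self_eq_zero.mp (hy y)⟩
  set A := B.symmCompOfNondegenerate (innerₗ E) hinner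
  have hAB : ∀ x y, ⟪A x, y⟫ = B x y := fun x y => B.symmCompOfNondegenerate_left_apply hinner y x
  have hA : A.IsSymmetric := fun x y => by rw [hAB, real_inner_comm, hAB, hB.eq]
  have hJA : Commute J A := LinearMap.ext fun x => ext_inner_right ℝ fun y => by
    calc ⟪J (A x), y⟫ = -B x (J y) := by rw [← hJ, hJJ, inner_neg_left, hAB]
      _ = B (J x) y := by rw [← hJB (J x) y, hJJ, map_neg, LinearMap.neg_apply]
      _ = ⟪A (J x), y⟫ := (hAB _ _).symm
  have hμ : ∀ i, hA.eigenvalues rfl i ≠ 0 := fun i hi => by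
    refine (hA.eigenvectorBasis rfl).orthonormal.ne_zero i (hBnd.1 _ fun y => ?_)
    rw [← hAB, hA.apply_eigenvectorBasis_eq_smul, hi, zero_smul, inner_zero_left]
  have horth : B.orthogonal (spectralSubspace A (Set.Ioi 0)) = spectralSubspace A (Set.Iic 0) := by
    ext y
    rw [mem_orthogonal_iff, ← Set.compl_Ioi, hA.mem_spectralSubspace_compl_iff fun i _ => hμ i]
    simp only [hAB]
  refine ⟨spectralSubspace A (Set.Ioi 0), ?_⟩
  rw [horth]
  refine ⟨Submodule.map_eq_self_of_map_le hJ2 (map_spectralSubspace_le_of_commute hJA),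
    fun x hx hx0 => ?_, fun x hx hx0 => ?_,
    Submodule.map_eq_self_of_map_le hJ2 (map_spectralSubspace_le_of_commute hJA), ?_⟩
  · rw [← hAB]
    exact hA.inner_apply_self_pos_of_mem_spectralSubspace (fun i hi => hi) hx hx0
  · rw [← hAB]
    exact hA.inner_apply_self_neg_of_mem_spectralSubspace
      (fun i hi => lt_of_le_of_ne hi (hμ i)) hx hx0
  · rw [← Set.compl_Ioi]
    exact hA.isCompl_spectralSubspace_compl

theorem exists_invariant_posDef_subspace {E : Type*} [AddCommGroup E] [Module ℝ E]
    [FiniteDimensional ℝ E] (B : LinearMap.BilinForm ℝ E) (hB : B.IsSymm)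
    (hBnd : B.Nondegenerate) (J : E →ₗ[ℝ] E) (hJ2 : J ∘ₗ J = -LinearMap.id)
    (hJB : ∀ x y, B (J x) (J y) = B x y) :
    ∃ Cp : Submodule ℝ E,
      Cp.map J = Cp ∧
      (∀ x ∈ Cp, x ≠ 0 → 0 < B x x) ∧
      (∀ x ∈ B.orthogonal Cp, x ≠ 0 → B x x < 0) ∧
      (B.orthogonal Cp).map J = B.orthogonal Cp ∧
      IsCompl Cp (B.orthogonal Cp) := by
  -- `⟪x, y⟫ := ⟪e x, e y⟫ + ⟪e (J x), e (J y)⟫` is a `J`-invariant inner product.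
  let e : E →ₗ[ℝ] EuclideanSpace ℝ (Fin (finrank ℝ E)) :=
    (WithLp.linearEquiv 2 ℝ _).symm.toLinearMap ∘ₗ (Module.finBasis ℝ E).equivFun.toLinearMap
  let T : E →ₗ[ℝ] WithLp 2
      (EuclideanSpace ℝ (Fin (finrank ℝ E)) × EuclideanSpace ℝ (Fin (finrank ℝ E))) :=
    (WithLp.linearEquiv 2 ℝ _).symm.toLinearMap ∘ₗ e.prod (e ∘ₗ J)
  have hT : Function.Injective T := fun x y h => by
    simpa [T, e] using congrArg (fun z => (WithLp.ofLp z).1) h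
  let := NormedAddCommGroup.induced E _ T hT
  let := InnerProductSpace.induced T
  refine exists_invariant_posDef_subspace_of_inner B hB hBnd J hJ2 hJB fun x y => ?_
  have hJJ : ∀ z, J (J z) = -z := fun z => by simpa using LinearMap.congr_fun hJ2 z
  change ⟪T (J x), T (J y)⟫ = ⟪T x, T y⟫
  simp [T, hJJ, add_comm]

end LinearMap.BilinForm

theorem LinearMap.injective_comp_subtype_of_isotropic_ker {R M N : Type*} [CommRing R]
    [AddCommGroup M] [Module R M] [AddCommGroup N] [Module R N]
    {B : LinearMap.BilinForm R M} {f : M →ₗ[R] N} (hf : ∀ x, f x = 0 → B x x = 0)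
    {Q : Submodule R M} (hQ : ∀ x ∈ Q, x ≠ 0 → B x x ≠ 0) :
    Function.Injective (f ∘ₗ Q.subtype) := by
  refine (injective_iff_map_eq_zero _).mpr fun x hx => Subtype.ext ?_
  by_contra hx0
  exact hQ x x.2 hx0 (hf x hx)

theorem LinearMap.bijective_comp_subtype_of_isCompl {K M N : Type*} [Field K] [AddCommGroup M]
    [Module K M] [AddCommGroup N] [Module K N] [FiniteDimensional K M] [FiniteDimensional K N]
    (f : M →ₗ[K] N) (hM : finrank K M = finrank K N + finrank K N) {P Q : Submodule K M}
    (hPQ : IsCompl P Q) (hP : Function.Injective (f ∘ₗ P.subtype))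
    (hQ : Function.Injective (f ∘ₗ Q.subtype)) :
    Function.Bijective (f ∘ₗ P.subtype) ∧ Function.Bijective (f ∘ₗ Q.subtype) := by
  have hsum := Submodule.finrank_add_eq_of_isCompl hPQ
  have hPle := LinearMap.finrank_le_finrank_of_injective hP
  have hQle := LinearMap.finrank_le_finrank_of_injective hQ
  exact ⟨⟨hP, (injective_iff_surjective_of_finrank_eq_finrank (by omega)).mp hP⟩,
    ⟨hQ, (injective_iff_surjective_of_finrank_eq_finrank (by omega)).mp hQ⟩⟩

section Pairing

variable {V : Type*} [AddCommGroup V] [Module ℝ V]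

theorem pairB_apply_self (x : V × Module.Dual ℝ V) : pairB V x x = x.2 x.1 := by
  simp only [pairB, one_div, LinearMap.mk₂_apply]
  ring

theorem pairB_isSymm : (pairB V).IsSymm :=
  ⟨fun x y => by simp [pairB, add_comm]⟩

theorem pairB_nondegenerate : (pairB V).Nondegenerate := by
  have hrefl := (LinearMap.BilinForm.isSymm_iff.mp (pairB_isSymm (V := V))).isRefl
  refine hrefl.nondegenerate_iff_separatingLeft.mpr fun x hx => Prod.ext ?_ ?_
  · refine (Module.forall_dual_apply_eq_zero_iff ℝ x.1).mp fun φ => ?_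
    simpa [pairB] using hx (0, φ)
  · ext v
    simpa [pairB] using hx (v, 0)

end Pairing

/-- An orthogonal complex structure `J` on `W` admits a `J`-invariant positive definite
subspace `C⁺` whose orthogonal complement `C⁻` is `J`-invariant and negative definite,
with `W = C⁺ ⊕ C⁻`, and the projection `π_V` restricts to isomorphisms `C⁺ ≅ V ≅ C⁻`. -/
theorem orthogonal_complex_structure_reduction
    {V : Type*} [AddCommGroup V] [Module ℝ V] [FiniteDimensional ℝ V]
    (J : (V × Module.Dual ℝ V) →ₗ[ℝ] V × Module.Dual ℝ V)
    (hJ2 : J ∘ₗ J = -LinearMap.id)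
    (horth : ∀ x y, pairB V (J x) (J y) = pairB V x y) :
    ∃ Cp : Submodule ℝ (V × Module.Dual ℝ V),
      Submodule.map J Cp = Cp ∧
      (∀ x ∈ Cp, x ≠ 0 → 0 < pairB V x x) ∧
      (∀ x ∈ (pairB V).orthogonal Cp, x ≠ 0 → pairB V x x < 0) ∧
      Submodule.map J ((pairB V).orthogonal Cp) = (pairB V).orthogonal Cp ∧
      IsCompl Cp ((pairB V).orthogonal Cp) ∧
      Function.Bijective (LinearMap.fst ℝ V (Module.Dual ℝ V) ∘ₗ Cp.subtype) ∧
      Function.Bijective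
        (LinearMap.fst ℝ V (Module.Dual ℝ V) ∘ₗ ((pairB V).orthogonal Cp).subtype) := by
  obtain ⟨Cp, hJCp, hpos, hneg, hJCn, hcompl⟩ :=
    LinearMap.BilinForm.exists_invariant_posDef_subspace (pairB V) pairB_isSymm
      pairB_nondegenerate J hJ2 horth
  have hfst : ∀ x, LinearMap.fst ℝ V (Module.Dual ℝ V) x = 0 → pairB V x x = 0 := fun x hx => by
    rw [pairB_apply_self, show x.1 = 0 from hx, map_zero]
  have hdim : finrank ℝ (V × Module.Dual ℝ V) = finrank ℝ V + finrank ℝ V := by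
    rw [finrank_prod, Subspace.dual_finrank_eq]
  obtain ⟨hbijp, hbijn⟩ := LinearMap.bijective_comp_subtype_of_isCompl _ hdim hcompl
    (LinearMap.injective_comp_subtype_of_isotropic_ker hfst fun x hx hx0 => (hpos x hx hx0).ne')
    (LinearMap.injective_comp_subtype_of_isotropic_ker hfst fun x hx hx0 => (hneg x hx hx0).ne)
  exact ⟨Cp, hJCp, hpos, hneg, hJCn, hcompl, hbijp, hbijn⟩
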